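/- Let X and Y be racks. Suppose there exist four distinct elements y₁, y₂, y₃, y₄ ∈ Y with yᵢ ▷ y_j = y_j for all i, j, and elements x₁, x₂, x₃, x₄ ∈ X with xᵢ ▷ x_j ≠ x_j for all i ≠ j. Then the product rack X × Y is of type F. -/

import Mathlib

/-!
Take for `Rₐ` the fibre of the projection `X × Y → Y` over `yₐ`. Since the `yₐ` fix each other,
each fibre is a subrack and every element of `Rₐ` maps `R_b` into itself, hence onto it (the
action is bijective and its inverse also fixes `y_b`). The points `rₐ = (xₐ, yₐ)` act
nontrivially on each other because their first coordinates do.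
-/

open Quandles

/-- The product of two racks, with componentwise operation. -/
instance Rack.prod (X Y : Type*) [Rack X] [Rack Y] : Rack (X × Y) where
  act p q := (p.1 ◃ q.1, p.2 ◃ q.2)
  self_distrib := by
    intro p q r
    exact Prod.ext Shelf.self_distrib Shelf.self_distrib
  invAct p q := (p.1 ◃⁻¹ q.1, p.2 ◃⁻¹ q.2)
  left_inv p q := Prod.ext (Rack.left_inv p.1 q.1) (Rack.left_inv p.2 q.2)
  right_inv p q := Prod.ext (Rack.right_inv p.1 q.1) (Rack.right_inv p.2 q.2)

/-- A subset of a rack is a subrack if it is closed under the rack operation. -/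
def IsSubrack {Z : Type*} [Rack Z] (R : Set Z) : Prop :=
  ∀ x ∈ R, ∀ y ∈ R, x ◃ y ∈ R

/-- A rack `Z` is of type F if it has four pairwise disjoint subracks
`R₁, R₂, R₃, R₄` with `Rₐ ◃ R_b = R_b` for `a ≠ b`, and elements `rₐ ∈ Rₐ` with
`rₐ ◃ r_b ≠ r_b` for `a ≠ b`. -/
def IsTypeF (Z : Type*) [Rack Z] : Prop :=
  ∃ R : Fin 4 → Set Z, (∀ a, IsSubrack (R a)) ∧
    (∀ a b, a ≠ b → Disjoint (R a) (R b)) ∧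
    (∀ a b, a ≠ b → {z | ∃ x ∈ R a, ∃ y ∈ R b, z = x ◃ y} = R b) ∧
    ∃ r : Fin 4 → Z, (∀ a, r a ∈ R a) ∧ ∀ a b, a ≠ b → r a ◃ r b ≠ r b

def Rack.prodSnd (X Y : Type*) [Rack X] [Rack Y] : X × Y →◃ Y where
  toFun := Prod.snd
  map_act' := rfl

namespace ShelfHom

variable {Z W : Type*} [Rack Z]

theorem isSubrack_preimage_singleton [Shelf W] (f : Z →◃ W) {w : W} (hw : w ◃ w = w) :
    IsSubrack (f ⁻¹' {w}) := by
  intro x hx y hy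
  simp only [Set.mem_preimage, Set.mem_singleton_iff, map_act] at hx hy ⊢
  rw [hx, hy, hw]

theorem setOf_act_preimage_singleton_eq [Rack W] (f : Z →◃ W) {v w : W} (hvw : v ◃ w = w)
    (hv : (f ⁻¹' {v}).Nonempty) :
    {z | ∃ x ∈ f ⁻¹' {v}, ∃ y ∈ f ⁻¹' {w}, z = x ◃ y} = f ⁻¹' {w} := by
  ext z
  simp only [Set.mem_ofPred_eq, Set.mem_preimage, Set.mem_singleton_iff]
  constructor
  · rintro ⟨x, hx, y, hy, rfl⟩
    rw [map_act, hx, hy, hvw]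
  · intro hz
    obtain ⟨r, hr⟩ := hv
    rw [Set.mem_preimage, Set.mem_singleton_iff] at hr
    have hrz : f (r ◃⁻¹ z) = w := by
      rw [← Rack.left_cancel v, hvw, ← hr, ← map_act, Rack.act_invAct_eq, hz]
    exact ⟨r, hr, r ◃⁻¹ z, hrz, (Rack.act_invAct_eq r z).symm⟩

end ShelfHom

theorem isTypeF_of_shelfHom {Z W : Type*} [Rack Z] [Rack W] (f : Z →◃ W) (r : Fin 4 → Z)
    (hinj : Function.Injective (f ∘ r)) (htriv : ∀ a b, f (r a) ◃ f (r b) = f (r b))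
    (hr : ∀ a b, a ≠ b → r a ◃ r b ≠ r b) : IsTypeF Z := by
  refine ⟨fun a => f ⁻¹' {f (r a)}, fun a => f.isSubrack_preimage_singleton (htriv a a),
    fun a b hab => ?_, fun a b _ => f.setOf_act_preimage_singleton_eq (htriv a b) ⟨r a, rfl⟩,
    r, fun a => rfl, hr⟩
  exact Disjoint.preimage f (Set.disjoint_singleton.mpr (hinj.ne hab))

/-- Let `X`, `Y` be racks.  If `Y` has four distinct elements `y₁, …, y₄` acting
trivially on each other and `X` has elements `x₁, …, x₄` with `xᵢ ◃ x_j ≠ x_j`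
for `i ≠ j`, then the product rack `X × Y` is of type F. -/
theorem stmt7 {X Y : Type*} [Rack X] [Rack Y]
    (y : Fin 4 → Y) (hyinj : Function.Injective y)
    (hy : ∀ i j, y i ◃ y j = y j)
    (x : Fin 4 → X) (hx : ∀ i j, i ≠ j → x i ◃ x j ≠ x j) :
    IsTypeF (X × Y) :=
  isTypeF_of_shelfHom (Rack.prodSnd X Y) (fun a => (x a, y a)) hyinj hy
    fun a b hab h => hx a b hab (congrArg Prod.fst h)
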